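/- Let κ₂ = sup_x ‖∇²f(x)‖ and suppose 0 < ρ ≤ 1/κ₂. Then the Euler Shift sequence x_{k+1} = x_k + ρ∇f(x_k) satisfies f(x_{k+1}) − f(x_k) ≥ (ρ/2)‖∇f(x_k)‖² for all k (the algorithm is hill-climbing), and for every s ∈ (0, sup f) and every connected component C of {f ≥ s}, if x₀ ∈ C then the sequence remains in C and converges to a critical point of f inside C. -/

import Mathlib

open Metric Set Filter MeasureTheory Topology
open scoped Topology RealInnerProductSpace

abbrev Euc (d : ℕ) := EuclideanSpace ℝ (Fin d)

/-- The Hessian of `f`, as the derivative of the gradient field. -/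
noncomputable def hess {d : ℕ} (f : Euc d → ℝ) (x : Euc d) : Euc d →L[ℝ] Euc d :=
  fderiv ℝ (gradient f) x

/-- The standing assumptions on the density `f`: nonnegative, integrable, vanishing at
infinity, twice differentiable with bounded and uniformly continuous zeroth, first and
second derivatives, and Morse (nonsingular Hessian at every critical point). -/
def IsNiceDensity {d : ℕ} (f : Euc d → ℝ) : Prop :=
  (∀ x, 0 ≤ f x) ∧
  Integrable f volume ∧
  Tendsto f (cocompact (Euc d)) (𝓝 0) ∧
  Differentiable ℝ f ∧
  Differentiable ℝ (gradient f) ∧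
  (∃ M, ∀ x, |f x| ≤ M) ∧
  (∃ M, ∀ x, ‖gradient f x‖ ≤ M) ∧
  (∃ M, ∀ x, ‖hess f x‖ ≤ M) ∧
  UniformContinuous f ∧
  UniformContinuous (gradient f) ∧
  UniformContinuous (hess f) ∧
  (∀ x, gradient f x = 0 → Function.Bijective (hess f x))

/-- `γ` is the gradient ascent curve of `f` starting at `x`, defined on `[0, ∞)`. -/
def IsGradFlow {d : ℕ} (f : Euc d → ℝ) (x : Euc d) (γ : ℝ → Euc d) : Prop :=
  γ 0 = x ∧ ∀ t ∈ Ici (0:ℝ), HasDerivWithinAt γ (gradient f (γ t)) (Ici 0) t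

/-- The Euler Shift sequence with step size `ρ` started at `x₀`. -/
def IsEulerShiftSeq {d : ℕ} (f : Euc d → ℝ) (ρ : ℝ) (x₀ : Euc d) (x : ℕ → Euc d) : Prop :=
  x 0 = x₀ ∧ ∀ k : ℕ, x (k+1) = x k + ρ • gradient f (x k)

/-!
The Hessian bound `κ₂` makes `∇f` `κ₂`-Lipschitz, so by the descent lemma a step of length
`c ≤ 1/κ₂` along `∇f` raises `f` by at least `(c/2)‖∇f‖²`. Applied to every `c ∈ [0, ρ]`, this keeps
the whole segment from `x_k` to `x_{k+1}` inside `{f ≥ f(x_k)} ⊆ {f ≥ s}`, so the iterates never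
leave the component `C`, which is compact because `f → 0` at infinity. As `f` is bounded, the
increments `f(x_{k+1}) - f(x_k)` tend to `0`, hence so do `∇f(x_k)` and the step lengths; every
cluster point is then critical, and critical points are isolated by the Morse condition. Finally, a
sequence with vanishing steps in a proper space converges to any cluster point that is isolated
among its cluster points: otherwise it would cross a small annulus around that point infinitely
often and so have a second cluster point nearby.
-/

open scoped NNReal

theorem MapClusterPt.eq_of_tendsto {X α : Type*} [TopologicalSpace X] [T2Space X] {F : Filter α}
    {u : α → X} {x y : X} (h : MapClusterPt y F u) (hu : Tendsto u F (𝓝 x)) : y = x := by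
  by_contra hne
  exact (h.clusterPt.mono hu).ne (disjoint_iff.mp (disjoint_nhds_nhds.mpr hne))

theorem IsClosed.connectedComponentIn {X : Type*} [TopologicalSpace X] {F : Set X}
    (hF : IsClosed F) (x : X) : IsClosed (connectedComponentIn F x) := by
  by_cases hx : x ∈ F
  · refine closure_subset_iff_isClosed.mp ?_
    exact isPreconnected_connectedComponentIn.closure.subset_connectedComponentIn
      (subset_closure (mem_connectedComponentIn hx))
      (closure_minimal (connectedComponentIn_subset F x) hF)
  · rw [connectedComponentIn_eq_empty hx]
    exact isClosed_empty

theorem isCompact_setOf_le_of_tendsto_cocompact {X : Type*} [TopologicalSpace X] {f : X → ℝ}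
    (hf : Continuous f) (hlim : Tendsto f (cocompact X) (𝓝 0)) {s : ℝ} (hs : 0 < s) :
    IsCompact {x | s ≤ f x} := by
  obtain ⟨K, hK, hKs⟩ := mem_cocompact.mp (hlim (Iio_mem_nhds hs))
  refine hK.of_isClosed_subset (isClosed_le continuous_const hf) fun x hx => ?_
  by_contra hxK
  exact (show f x < s from hKs hxK).not_ge hx

theorem mem_connectedComponentIn_of_segment_subset {E : Type*} [AddCommGroup E] [Module ℝ E]
    [TopologicalSpace E] [IsTopologicalAddGroup E] [ContinuousSMul ℝ E] {S : Set E} {u : ℕ → E}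
    (hu : ∀ n, segment ℝ (u n) (u (n + 1)) ⊆ S) (n : ℕ) : u n ∈ connectedComponentIn S (u 0) := by
  induction n with
  | zero => exact mem_connectedComponentIn (hu 0 (left_mem_segment ℝ _ _))
  | succ n ih =>
    rw [connectedComponentIn_eq ih]
    exact (convex_segment _ _).isPreconnected.subset_connectedComponentIn
      (left_mem_segment ℝ _ _) (hu n) (right_mem_segment ℝ _ _)

theorem HasFDerivAt.eventually_ne_of_injective {𝕜 E F : Type*} [NontriviallyNormedField 𝕜]
    [CompleteSpace 𝕜] [NormedAddCommGroup E] [NormedSpace 𝕜 E] [FiniteDimensional 𝕜 E]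
    [NormedAddCommGroup F] [NormedSpace 𝕜 F] {g : E → F} {g' : E →L[𝕜] F} {x : E}
    (h : HasFDerivAt g g' x) (hg' : Function.Injective g') : ∀ᶠ z in 𝓝[≠] x, g z ≠ g x := by
  obtain ⟨K, -, hK⟩ := (g' : E →ₗ[𝕜] F).exists_antilipschitzWith (LinearMap.ker_eq_bot.mpr hg')
  exact h.eventually_ne ⟨K, hK⟩

theorem tendsto_nhds_zero_of_add_le_succ {a b : ℕ → ℝ} (hb : ∀ k, 0 ≤ b k)
    (hab : ∀ k, a k + b k ≤ a (k + 1)) (hbdd : BddAbove (range a)) :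
    Tendsto b atTop (𝓝 0) := by
  have hmono : Monotone a := monotone_nat_of_le_succ fun k => by linarith [hab k, hb k]
  have hlim := tendsto_atTop_ciSup hmono hbdd
  have hdiff : Tendsto (fun k => a (k + 1) - a k) atTop (𝓝 0) := by
    simpa using (hlim.comp (tendsto_add_atTop_nat 1)).sub hlim
  exact squeeze_zero hb (fun k => by linarith [hab k]) hdiff

theorem frequently_mem_Ico_of_frequently_lt_of_frequently_le {v : ℕ → ℝ} {a δ : ℝ}
    (hstep : ∀ᶠ n in atTop, v (n + 1) < v n + δ) (hlow : ∃ᶠ n in atTop, v n < a)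
    (hhigh : ∃ᶠ n in atTop, a ≤ v n) : ∃ᶠ n in atTop, v n ∈ Ico a (a + δ) := by
  rw [frequently_atTop] at hlow hhigh ⊢
  intro N
  obtain ⟨N₁, hN₁⟩ := eventually_atTop.mp hstep
  obtain ⟨k, hk, hvk⟩ := hlow (max N N₁)
  obtain ⟨m, hm, hvm⟩ := hhigh k
  suffices ∀ m, k ≤ m → a ≤ v m → ∃ j ≥ k, v j ∈ Ico a (a + δ) by
    obtain ⟨j, hj, hvj⟩ := this m hm hvm
    exact ⟨j, le_trans (le_max_left _ _) (hk.trans hj), hvj⟩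
  intro m hm
  induction m, hm using Nat.le_induction with
  | base => exact fun h => absurd h (not_le.mpr hvk)
  | succ m hkm ih =>
    intro hvm
    by_cases hlt : v m < a
    · exact ⟨m + 1, by omega, hvm, by linarith [hN₁ m (by omega)]⟩
    · obtain ⟨j, hj, hvj⟩ := ih (not_lt.mp hlt)
      exact ⟨j, hj, hvj⟩

theorem tendsto_of_dist_succ_tendsto_zero_of_mapClusterPt {X : Type*} [MetricSpace X]
    [ProperSpace X] {u : ℕ → X} {z : X}
    (hstep : Tendsto (fun n => dist (u (n + 1)) (u n)) atTop (𝓝 0))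
    (hz : MapClusterPt z atTop u) (hiso : ∀ᶠ w in 𝓝[≠] z, ¬ MapClusterPt w atTop u) :
    Tendsto u atTop (𝓝 z) := by
  obtain ⟨r, hr, hball⟩ := Metric.mem_nhdsWithin_iff.mp hiso
  suffices h : ∀ δ, 0 < δ → δ < r → ∀ᶠ n in atTop, dist (u n) z < δ by
    refine Metric.tendsto_nhds.mpr fun ε hε => ?_
    have hδ : 0 < min ε (r / 2) := lt_min hε (half_pos hr)
    filter_upwards [h _ hδ ((min_le_right _ _).trans_lt (half_lt_self hr))] with n hn
    exact hn.trans_le (min_le_left _ _)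
  intro δ hδ hδr
  by_contra hfar
  simp only [not_eventually, not_lt] at hfar
  have hann : ∃ᶠ n in atTop, u n ∈ closedBall z (2 * δ / 3) \ ball z (δ / 3) := by
    have hsmall : ∀ᶠ n in atTop, dist (u (n + 1)) (u n) < δ / 3 :=
      hstep (Iio_mem_nhds (by positivity))
    refine (frequently_mem_Ico_of_frequently_lt_of_frequently_le (a := δ / 3) (δ := δ / 3)
      ?_ (hz.frequently (ball_mem_nhds z (by positivity)))
      (hfar.mono fun n hn => by linarith)).mono fun n hn => ⟨?_, not_lt.mpr hn.1⟩
    · exact hsmall.mono fun n hn => by linarith [dist_triangle (u (n + 1)) (u n) z]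
    · exact mem_closedBall.mpr (by linarith [hn.2])
  obtain ⟨w, ⟨hwδ, hwz⟩, hw⟩ :=
    ((isCompact_closedBall z _).diff isOpen_ball).exists_mapClusterPt_of_frequently hann
  refine hball ⟨mem_ball.mpr ((mem_closedBall.mp hwδ).trans_lt (by linarith)), ?_⟩ hw
  rintro rfl
  exact hwz (mem_ball_self (by positivity))

section GradientAscent

variable {E : Type*} [NormedAddCommGroup E] [InnerProductSpace ℝ E] [CompleteSpace E]
  {f : E → ℝ} {K : ℝ≥0}

theorem hasDerivAt_comp_add_smul (hf : Differentiable ℝ f) (x v : E) (t : ℝ) :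
    HasDerivAt (fun t : ℝ => f (x + t • v)) ⟪gradient f (x + t • v), v⟫ t := by
  have hline : HasDerivAt (fun t : ℝ => x + t • v) v t := by
    simpa using ((hasDerivAt_id t).smul_const v).const_add x
  simpa [Function.comp_def] using
    (hf (x + t • v)).hasGradientAt.hasFDerivAt.comp_hasDerivAt t hline

theorem add_inner_gradient_sub_le (hf : Differentiable ℝ f) (hg : LipschitzWith K (gradient f))
    (x v : E) : f x + ⟪gradient f x, v⟫ - K / 2 * ‖v‖ ^ 2 ≤ f (x + v) := by
  set h : ℝ → ℝ := fun t => f (x + t • v) - t * ⟪gradient f x, v⟫ + K / 2 * t ^ 2 * ‖v‖ ^ 2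
  have hder : ∀ t, HasDerivAt h
      (⟪gradient f (x + t • v) - gradient f x, v⟫ + K * t * ‖v‖ ^ 2) t := by
    intro t
    refine (((hasDerivAt_comp_add_smul hf x v t).sub ((hasDerivAt_id t).mul_const _)).add
      (((hasDerivAt_pow 2 t).const_mul ((K : ℝ) / 2)).mul_const (‖v‖ ^ 2))).congr_deriv ?_
    rw [inner_sub_left]
    push_cast
    ring
  have hmono : MonotoneOn h (Icc 0 1) := by
    refine monotoneOn_of_hasDerivWithinAt_nonneg (convex_Icc 0 1)
      (fun t _ => (hder t).continuousAt.continuousWithinAt)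
      (fun t _ => (hder t).hasDerivWithinAt) fun t ht => ?_
    rw [interior_Icc] at ht
    have hlip : ‖gradient f (x + t • v) - gradient f x‖ ≤ K * (t * ‖v‖) := by
      simpa [norm_smul, abs_of_pos ht.1] using hg.norm_sub_le (x + t • v) x
    have := neg_le_of_abs_le (abs_real_inner_le_norm (gradient f (x + t • v) - gradient f x) v)
    nlinarith [mul_le_mul_of_nonneg_right hlip (norm_nonneg v)]
  have := hmono (left_mem_Icc.2 zero_le_one) (right_mem_Icc.2 zero_le_one) zero_le_one
  simp only [h, zero_smul, add_zero, one_smul, zero_mul, one_mul, sub_zero, zero_pow two_ne_zero,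
    mul_zero, one_pow, mul_one] at this
  linarith

theorem add_mul_norm_gradient_sq_le (hf : Differentiable ℝ f) (hg : LipschitzWith K (gradient f))
    {c : ℝ} (hc : 0 ≤ c) (hcK : c * K ≤ 1) (x : E) :
    f x + c / 2 * ‖gradient f x‖ ^ 2 ≤ f (x + c • gradient f x) := by
  have := add_inner_gradient_sub_le hf hg x (c • gradient f x)
  rw [real_inner_smul_right, real_inner_self_eq_norm_sq, norm_smul, mul_pow, Real.norm_eq_abs,
    sq_abs] at this
  nlinarith [mul_nonneg (mul_nonneg hc (sq_nonneg ‖gradient f x‖)) (sub_nonneg.mpr hcK)]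

theorem segment_add_smul_gradient_subset (hf : Differentiable ℝ f)
    (hg : LipschitzWith K (gradient f)) {c : ℝ} (hc : 0 ≤ c) (hcK : c * K ≤ 1) (x : E) :
    segment ℝ x (x + c • gradient f x) ⊆ {y | f x ≤ f y} := by
  rw [segment_eq_image']
  rintro - ⟨t, ⟨ht0, ht1⟩, rfl⟩
  have htc : t * c * K ≤ 1 := by nlinarith [mul_le_mul_of_nonneg_right ht1 hc]
  have := add_mul_norm_gradient_sq_le hf hg (mul_nonneg ht0 hc) htc x
  show f x ≤ f (x + t • (x + c • gradient f x - x))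
  rw [add_sub_cancel_left, smul_smul]
  nlinarith [mul_nonneg (mul_nonneg ht0 hc) (sq_nonneg ‖gradient f x‖)]

theorem mem_connectedComponentIn_of_gradient_step (hf : Differentiable ℝ f)
    (hg : LipschitzWith K (gradient f)) {c : ℝ} (hc : 0 ≤ c) (hcK : c * K ≤ 1) {u : ℕ → E}
    (hu : ∀ k, u (k + 1) = u k + c • gradient f (u k)) {s : ℝ} (hs : s ≤ f (u 0)) (k : ℕ) :
    u k ∈ connectedComponentIn {y | s ≤ f y} (u 0) := by
  have hmono : Monotone fun k => f (u k) := monotone_nat_of_le_succ fun k => by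
    nlinarith [hu k ▸ add_mul_norm_gradient_sq_le hf hg hc hcK (u k),
      sq_nonneg ‖gradient f (u k)‖]
  refine mem_connectedComponentIn_of_segment_subset (fun k => ?_) k
  rw [hu k]
  exact (segment_add_smul_gradient_subset hf hg hc hcK (u k)).trans
    fun y hy => (hs.trans (hmono (Nat.zero_le k))).trans hy

theorem tendsto_norm_gradient_of_gradient_step (hf : Differentiable ℝ f)
    (hg : LipschitzWith K (gradient f)) {c : ℝ} (hc : 0 < c) (hcK : c * K ≤ 1) {u : ℕ → E}
    (hu : ∀ k, u (k + 1) = u k + c • gradient f (u k)) (hbdd : BddAbove (range (f ∘ u))) :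
    Tendsto (fun k => ‖gradient f (u k)‖) atTop (𝓝 0) := by
  have hsq : Tendsto (fun k => ‖gradient f (u k)‖ ^ 2) atTop (𝓝 0) := by
    have := (tendsto_nhds_zero_of_add_le_succ (fun k => by positivity)
      (fun k => hu k ▸ add_mul_norm_gradient_sq_le hf hg hc.le hcK (u k)) hbdd).const_mul (2 / c)
    rw [mul_zero] at this
    exact this.congr fun k => by field_simp
  simpa using hsq.sqrt

end GradientAscent

theorem exists_lipschitzWith_gradient_mul_le_one {d : ℕ} {f : Euc d → ℝ}
    (hf : Differentiable ℝ (gradient f)) (hbdd : ∃ M, ∀ x, ‖hess f x‖ ≤ M) {ρ : ℝ} (hρ0 : 0 < ρ)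
    (hρ : ρ ≤ 1 / (⨆ x : Euc d, ‖hess f x‖)) :
    ∃ K : ℝ≥0, LipschitzWith K (gradient f) ∧ ρ * K ≤ 1 := by
  obtain ⟨M, hM⟩ := hbdd
  have hκ : ∀ y, ‖hess f y‖ ≤ ⨆ x : Euc d, ‖hess f x‖ :=
    le_ciSup ⟨M, by rintro - ⟨y, rfl⟩; exact hM y⟩
  have hκ0 : 0 < ⨆ x : Euc d, ‖hess f x‖ := by
    by_contra h
    exact (hρ0.trans_le hρ).not_ge (one_div_nonpos.mpr (not_lt.mp h))
  exact ⟨⟨_, hκ0.le⟩, lipschitzWith_of_nnnorm_fderiv_le hf fun y => hκ y,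
    (le_div_iff₀ hκ0).mp hρ⟩

theorem eulerShift_hill_climbing_and_converges_general
    {d : ℕ} (f : Euc d → ℝ) (hf : IsNiceDensity f)
    (ρ : ℝ) (hρ0 : 0 < ρ) (hρ : ρ ≤ 1 / (⨆ x : Euc d, ‖hess f x‖))
    (x₀ : Euc d) (x : ℕ → Euc d) (hx : IsEulerShiftSeq f ρ x₀ x) :
    (∀ k : ℕ, f (x k) + (ρ / 2) * ‖gradient f (x k)‖ ^ 2 ≤ f (x (k+1))) ∧
    (∀ s ∈ Ioo (0:ℝ) (⨆ y, f y), s ≤ f x₀ →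
      (∀ k, x k ∈ connectedComponentIn {z : Euc d | s ≤ f z} x₀) ∧
      ∃ z ∈ connectedComponentIn {z : Euc d | s ≤ f z} x₀,
        gradient f z = 0 ∧ Tendsto x atTop (𝓝 z)) := by
  obtain ⟨-, -, hvanish, hf₁, hf₂, ⟨M, hM⟩, -, hhess, -, -, -, hmorse⟩ := hf
  obtain ⟨rfl, hstep⟩ := hx
  obtain ⟨K, hlip, hρK⟩ := exists_lipschitzWith_gradient_mul_le_one hf₂ hhess hρ0 hρ
  refine ⟨fun k => hstep k ▸ add_mul_norm_gradient_sq_le hf₁ hlip hρ0.le hρK (x k),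
    fun s hs hsx => ?_⟩
  have hC := mem_connectedComponentIn_of_gradient_step hf₁ hlip hρ0.le hρK hstep hsx
  have hS := isCompact_setOf_le_of_tendsto_cocompact hf₁.continuous hvanish hs.1
  obtain ⟨z, hzC, hz⟩ := (hS.of_isClosed_subset (hS.isClosed.connectedComponentIn _)
    (connectedComponentIn_subset _ _)).exists_mapClusterPt (f := atTop)
      (tendsto_principal.mpr (.of_forall hC))
  have hgrad := tendsto_norm_gradient_of_gradient_step hf₁ hlip hρ0 hρK hstep
    ⟨M, by rintro - ⟨k, rfl⟩; exact le_of_abs_le (hM _)⟩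
  have hcrit : ∀ w, MapClusterPt w atTop x → gradient f w = 0 := fun w hw =>
    (hw.continuousAt_comp hf₂.continuous.continuousAt).eq_of_tendsto
      (tendsto_zero_iff_norm_tendsto_zero.mpr hgrad)
  refine ⟨hC, z, hzC, hcrit z hz, tendsto_of_dist_succ_tendsto_zero_of_mapClusterPt ?_ hz ?_⟩
  · simpa [hstep, dist_eq_norm, norm_smul, abs_of_pos hρ0] using hgrad.const_mul ρ
  · have hiso := (hf₂ z).hasFDerivAt.eventually_ne_of_injective (hmorse z (hcrit z hz)).1
    exact hiso.mono fun w hw hcl => hw (by rw [hcrit w hcl, hcrit z hz])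

/-- For `0 < ρ ≤ 1/κ₂`, Euler Shift is hill-climbing with
`f(x_{k+1}) − f(x_k) ≥ (ρ/2)‖∇f(x_k)‖²`, and when started inside a connected component `C` of
an upper level set `{f ≥ s}` (with `0 < s < sup f`), the sequence stays in `C` and converges
to a critical point of `f` inside `C`. -/
theorem eulerShift_hill_climbing_and_converges
    {d : ℕ} (hd : 0 < d) (f : Euc d → ℝ) (hf : IsNiceDensity f)
    (ρ : ℝ) (hρ0 : 0 < ρ) (hρ : ρ ≤ 1 / (⨆ x : Euc d, ‖hess f x‖))
    (x₀ : Euc d) (x : ℕ → Euc d) (hx : IsEulerShiftSeq f ρ x₀ x) :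
    (∀ k : ℕ, f (x k) + (ρ / 2) * ‖gradient f (x k)‖ ^ 2 ≤ f (x (k+1))) ∧
    (∀ s ∈ Ioo (0:ℝ) (⨆ y, f y), s ≤ f x₀ →
      (∀ k, x k ∈ connectedComponentIn {z : Euc d | s ≤ f z} x₀) ∧
      ∃ z ∈ connectedComponentIn {z : Euc d | s ≤ f z} x₀,
        gradient f z = 0 ∧ Tendsto x atTop (𝓝 z)) :=
  eulerShift_hill_climbing_and_converges_general f hf ρ hρ0 hρ x₀ x hx
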